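/- The trace of the endomorphism A = S ∘ ⋀^n(J_{2n}) of ⋀^n(ℂ^{2n}) equals (−1)^{n+⌊n/2⌋} · 2^n; in particular tr(A) ≠ 0. -/

import Mathlib

open Matrix

/-- The set of `n`-element subsets of `{1, …, 2n}` (realized as `Fin (2*n)`), indexing the
standard basis `e_I = e_{i₁} ∧ ⋯ ∧ e_{iₙ}` of the `n`-th exterior power `⋀ⁿ(ℂ^{2n})`. -/
abbrev Idx (n : ℕ) := {I : Finset (Fin (2 * n)) // I.card = n}

/-- The matrix of the induced linear map `⋀ⁿ(g)` on `⋀ⁿ(ℂ^{2n})` in the standard basis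
`{e_I}`: its `(I, J)` entry is the `n × n` minor of `g` with rows `I` and columns `J`
(both taken in increasing order), i.e. the coefficient of `e_I` in `⋀ⁿ(g)(e_J)`. -/
noncomputable def wedgePow (n : ℕ) (g : Matrix (Fin (2 * n)) (Fin (2 * n)) ℂ) :
    Matrix (Idx n) (Idx n) ℂ := fun I J =>
  Matrix.det (Matrix.of fun a b : Fin n =>
    g ((I.1.orderIsoOfFin I.2 a).1) ((J.1.orderIsoOfFin J.2 b).1))

/-- `qCoeff n I J = q(e_I, e_J)`, the coefficient of `e_1 ∧ ⋯ ∧ e_{2n}` in `e_I ∧ e_J`: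
it is `0` unless `J = Iᶜ`, in which case it is the sign `(-1)^{#{(i,j) ∈ I × J : i > j}}`
obtained by sorting the concatenation of the increasing enumerations of `I` and `J`. -/
noncomputable def qCoeff (n : ℕ) (I J : Idx n) : ℂ :=
  if (J : Finset (Fin (2 * n))) = (I : Finset (Fin (2 * n)))ᶜ then
    (-1 : ℂ) ^ (((I.1 ×ˢ J.1).filter fun p => p.2 < p.1).card)
  else 0

/-- The bilinear form `q` on `⋀ⁿ(ℂ^{2n})` defined by `v ∧ w = q(v, w) • e_1 ∧ ⋯ ∧ e_{2n}`,
written in coordinates with respect to the basis `{e_I}` (a vector of `⋀ⁿ(ℂ^{2n})` is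
recorded by its coordinate function `Idx n → ℂ`). -/
noncomputable def q (n : ℕ) (v w : Idx n → ℂ) : ℂ :=
  ∑ I : Idx n, ∑ J : Idx n, v I * w J * qCoeff n I J

/-- The basis vector `e_I` of `⋀ⁿ(ℂ^{2n})`, in coordinates. -/
noncomputable def eVec (n : ℕ) (I : Idx n) : Idx n → ℂ :=
  fun J => if J = I then 1 else 0

/-- The complement `Iᶜ` of an `n`-element subset of `{1, …, 2n}`. -/
def complIdx (n : ℕ) (I : Idx n) : Idx n :=
  ⟨(I : Finset (Fin (2 * n)))ᶜ, by
    rw [Finset.card_compl, I.2, Fintype.card_fin]; omega⟩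

/-- The matrix (in the basis `{e_I}`) of the linear map `S` on `⋀ⁿ(ℂ^{2n})` defined by
`S(e_I) = q(e_{Iᶜ}, e_I) • e_{Iᶜ}`. -/
noncomputable def Smat (n : ℕ) : Matrix (Idx n) (Idx n) ℂ := fun I J =>
  if I = complIdx n J then qCoeff n (complIdx n J) J else 0

/-- The `n × n` matrix `w_n` with entries `1` at positions `(i, n+1-i)` and `0` elsewhere. -/
noncomputable def wnMat (n : ℕ) : Matrix (Fin n) (Fin n) ℂ := fun i j =>
  if (i : ℕ) + (j : ℕ) + 1 = n then 1 else 0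

/-- The `2n × 2n` matrix `J_{2n}` with block form `[[0, wₙ], [-wₙ, 0]]`. -/
noncomputable def JMat (n : ℕ) : Matrix (Fin (2 * n)) (Fin (2 * n)) ℂ :=
  Matrix.reindex (finSumFinEquiv.trans (finCongr (by omega)))
    (finSumFinEquiv.trans (finCongr (by omega)))
    (Matrix.fromBlocks 0 (wnMat n) (-(wnMat n)) 0)

/-- The matrix of the endomorphism `A = S ∘ ⋀ⁿ(J_{2n})` of `⋀ⁿ(ℂ^{2n})`. -/
noncomputable def Amat (n : ℕ) : Matrix (Idx n) (Idx n) ℂ :=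
  Smat n * wedgePow n (JMat n)

/-!
`J_{2n}` sends `e_j` to `±e_{rev j}`, so the minor of `J_{2n}` with rows `Iᶜ` and columns `I`
vanishes unless `I` contains exactly one element of each pair `{j, rev j}`, and there are `2ⁿ`
such `I`. For these, `Iᶜ = rev I` and the minor is a signed anti-diagonal matrix, of determinant
`(-1)^{⌊n/2⌋} (-1)^{#(I ∩ [1, n])}`. The inversions counted by `q(e_I, e_{Iᶜ})` correspond to the
pairs `(i, i') ∈ I × I` with `i + i' > 2n + 1`; off the diagonal they come in symmetric pairs, so
`q(e_I, e_{Iᶜ}) = (-1)^{#(I ∩ [n+1, 2n])}`. Hence each of the `2ⁿ` nonzero diagonal entries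
`S_{I,Iᶜ} ⋀ⁿ(J)_{Iᶜ,I}` of `A` equals `(-1)^{n + ⌊n/2⌋}`.
-/

open Finset

open Equiv in
theorem Fin.sign_revPerm_succ (n : ℕ) :
    Perm.sign (Fin.revPerm : Perm (Fin (n + 1))) =
      (-1) ^ n * Perm.sign (Fin.revPerm : Perm (Fin n)) := by
  have hdecomp : (Fin.revPerm : Perm (Fin (n + 1))) =
      finRotate (n + 1) * (Fin.revPerm : Perm (Fin n)).viaFintypeEmbedding Fin.castSuccEmb := by
    ext x
    induction x using Fin.lastCases with
    | last =>
      rw [Perm.mul_apply, Perm.viaFintypeEmbedding_apply_notMem_range _ _ (by simp)]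
      simp
    | cast y =>
      rw [Perm.mul_apply, ← Fin.coe_castSuccEmb, Perm.viaFintypeEmbedding_apply_image]
      simp; omega
  rw [hdecomp, Perm.sign_mul, sign_finRotate, Perm.viaFintypeEmbedding_sign]
  simp

theorem Fin.sign_revPerm (n : ℕ) :
    Equiv.Perm.sign (Fin.revPerm : Equiv.Perm (Fin n)) = (-1) ^ (n / 2) := by
  induction n with
  | zero => rfl
  | succ n ih =>
    rw [Fin.sign_revPerm_succ, ih]
    rcases Nat.even_or_odd' n with ⟨k, rfl | rfl⟩
    · rw [show (2 * k + 1) / 2 = 2 * k / 2 by omega, pow_mul, Int.units_sq, one_pow, one_mul]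
    · rw [show (2 * k + 1 + 1) / 2 = (2 * k + 1) / 2 + 1 by omega, pow_succ, pow_succ', pow_mul,
        Int.units_sq, one_pow, one_mul]

theorem card_filter_product_self_of_symmetric {α : Type*} [LinearOrder α] (s : Finset α)
    (r : α → α → Prop) [DecidableRel r] (hr : ∀ a b, r a b → r b a) :
    #{p ∈ s ×ˢ s | r p.1 p.2} = #{a ∈ s | r a a} + 2 * #{p ∈ s ×ˢ s | r p.1 p.2 ∧ p.1 < p.2} := by
  set u : Finset (α × α) := {p ∈ s ×ˢ s | r p.1 p.2 ∧ p.1 < p.2}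
  set v : Finset (α × α) := {p ∈ s ×ˢ s | r p.1 p.2 ∧ p.2 < p.1}
  set d : Finset (α × α) := {p ∈ s ×ˢ s | r p.1 p.2 ∧ p.1 = p.2}
  have hsplit : {p ∈ s ×ˢ s | r p.1 p.2} = d ∪ u ∪ v := by grind
  have hswap : #u = #v := card_equiv (Equiv.prodComm α α) (by grind)
  have hdiag : #d = #{a ∈ s | r a a} :=
    card_nbij' Prod.fst (fun a => (a, a)) (fun p hp => by grind) (fun a ha => by grind)
      (fun p hp => by grind) (fun a ha => by grind)
  rw [hsplit, card_union_of_disjoint (by grind [disjoint_left]),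
    card_union_of_disjoint (by grind [disjoint_left]), hdiag, ← hswap]
  ring

def IsRevFree {m : ℕ} (s : Finset (Fin m)) : Prop := ∀ i ∈ s, Fin.rev i ∉ s

instance {m : ℕ} : DecidablePred (IsRevFree (m := m)) :=
  fun s => inferInstanceAs (Decidable (∀ i ∈ s, Fin.rev i ∉ s))

theorem compl_eq_image_rev_of_isRevFree {n : ℕ} {s : Finset (Fin (2 * n))} (hs : #s = n)
    (h : IsRevFree s) : sᶜ = s.image Fin.rev := by
  refine (eq_of_subset_of_card_le (fun j hj => ?_) ?_).symm
  · obtain ⟨i, hi, rfl⟩ := mem_image.1 hj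
    exact mem_compl.2 (h i hi)
  · rw [card_image_of_injective _ Fin.rev_injective, card_compl, hs, Fintype.card_fin]
    omega

theorem card_eq_of_image_rev_eq_compl {n : ℕ} {s : Finset (Fin (2 * n))}
    (h : s.image Fin.rev = sᶜ) : #s = n := by
  have := congrArg card h
  rw [card_image_of_injective _ Fin.rev_injective, card_compl, Fintype.card_fin] at this
  have := card_le_univ s
  rw [Fintype.card_fin] at this
  omega

theorem rev_mem_iff_of_image_rev_eq_compl {m : ℕ} {s : Finset (Fin m)}
    (h : s.image Fin.rev = sᶜ) (x : Fin m) : x.rev ∈ s ↔ x ∉ s := by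
  rw [← mem_compl, ← h]
  simp [Fin.rev_eq_iff]

theorem orderEmbOfFin_eq_rev_of_eq_image_rev {m k : ℕ} {s t : Finset (Fin m)}
    (hst : t = s.image Fin.rev) (hs : #s = k) (ht : #t = k) (a : Fin k) :
    t.orderEmbOfFin ht a = Fin.rev (s.orderEmbOfFin hs (Fin.rev a)) := by
  refine congrFun (orderEmbOfFin_unique ht (f := fun a => Fin.rev (s.orderEmbOfFin hs (Fin.rev a)))
    (fun a => ?_) fun a b hab => ?_).symm a
  · exact hst ▸ mem_image_of_mem _ (orderEmbOfFin_mem s hs _)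
  · exact Fin.rev_lt_rev.2 ((s.orderEmbOfFin hs).strictMono (Fin.rev_lt_rev.2 hab))

def foldHalf {n : ℕ} (x : Fin (2 * n)) : Fin n :=
  ⟨min x x.rev, by rw [Fin.val_rev]; omega⟩

theorem foldHalf_rev {n : ℕ} (x : Fin (2 * n)) : foldHalf x.rev = foldHalf x := by
  simp [foldHalf, min_comm]

theorem foldHalf_castLE {n : ℕ} (h : n ≤ 2 * n) (k : Fin n) : foldHalf (Fin.castLE h k) = k := by
  ext; simp [foldHalf, Fin.val_rev]; omega

theorem castLE_foldHalf {n : ℕ} (h : n ≤ 2 * n) (x : Fin (2 * n)) :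
    Fin.castLE h (foldHalf x) = if (x : ℕ) < n then x else x.rev := by
  split_ifs <;> ext <;> simp [foldHalf, Fin.val_rev] <;> omega

/-- Contains `k` for `k ∈ A` and `Fin.rev k` for `k ∉ A`. -/
def revFreeLift (n : ℕ) (A : Finset (Fin n)) : Finset (Fin (2 * n)) :=
  {x | (x : ℕ) < n ↔ foldHalf x ∈ A}

theorem image_rev_revFreeLift (n : ℕ) (A : Finset (Fin n)) :
    (revFreeLift n A).image Fin.rev = (revFreeLift n A)ᶜ := by
  ext x
  have hlow : (x.rev : ℕ) < n ↔ ¬ (x : ℕ) < n := by rw [Fin.val_rev]; omega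
  simp [revFreeLift, Fin.rev_eq_iff, foldHalf_rev]
  tauto

def revFreeEquiv (n : ℕ) : {I : Idx n // IsRevFree I.1} ≃ Finset (Fin n) where
  toFun I := {k | Fin.castLE (by omega) k ∈ I.1.1}
  invFun A := ⟨⟨revFreeLift n A, card_eq_of_image_rev_eq_compl (image_rev_revFreeLift n A)⟩,
    fun i hi hri => (rev_mem_iff_of_image_rev_eq_compl (image_rev_revFreeLift n A) i).1 hri hi⟩
  left_inv := by
    rintro ⟨⟨I, hcard⟩, hI⟩
    ext x
    have hrev := rev_mem_iff_of_image_rev_eq_compl (compl_eq_image_rev_of_isRevFree hcard hI).symm x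
    simp only [revFreeLift, mem_filter, mem_univ, true_and, castLE_foldHalf]
    split_ifs <;> tauto
  right_inv A := by
    ext k
    simp [revFreeLift, foldHalf_castLE]

theorem card_isRevFree (n : ℕ) : #{I : Idx n | IsRevFree I.1} = 2 ^ n := by
  rw [← Fintype.card_subtype, Fintype.card_congr (revFreeEquiv n), Fintype.card_finset,
    Fintype.card_fin]

theorem JMat_apply (n : ℕ) (x y : Fin (2 * n)) :
    JMat n x y = if x = y.rev then (if (y : ℕ) < n then -1 else 1) else 0 := by
  set e : Fin n ⊕ Fin n ≃ Fin (2 * n) := finSumFinEquiv.trans (finCongr (by omega))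
  obtain ⟨a, rfl⟩ := e.surjective x
  obtain ⟨b, rfl⟩ := e.surjective y
  have hJ : JMat n (e a) (e b) = Matrix.fromBlocks 0 (wnMat n) (-wnMat n) 0 a b := by
    simp [JMat, e]
  rw [hJ]
  rcases a with a | a <;> rcases b with b | b <;>
    simp [e, wnMat, Fin.ext_iff, Fin.val_rev] <;> (try split_ifs) <;> first | rfl | omega | simp

theorem wedgePow_JMat_compl_of_not_isRevFree {n : ℕ} {I : Idx n} (hI : ¬ IsRevFree I.1) :
    wedgePow n (JMat n) (complIdx n I) I = 0 := by
  obtain ⟨i, hi, hri⟩ : ∃ i ∈ I.1, i.rev ∈ I.1 := by simpa [IsRevFree] using hI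
  refine det_eq_zero_of_column_eq_zero ((I.1.orderIsoOfFin I.2).symm ⟨i, hi⟩) fun a => ?_
  rw [of_apply, OrderIso.apply_symm_apply, JMat_apply, if_neg]
  rintro h
  have hmem := ((complIdx n I).1.orderIsoOfFin (complIdx n I).2 a).2
  rw [h] at hmem
  exact mem_compl.1 hmem hri

theorem wedgePow_JMat_compl_of_isRevFree {n : ℕ} {I : Idx n} (hI : IsRevFree I.1) :
    wedgePow n (JMat n) (complIdx n I) I = (-1) ^ (n / 2) * (-1) ^ #{i ∈ I.1 | i.val < n} := by
  set e := I.1.orderEmbOfFin I.2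
  set d : Fin n → ℂ := fun b => if (e b : ℕ) < n then -1 else 1
  have hminor : (of fun a b => JMat n ((complIdx n I).1.orderIsoOfFin (complIdx n I).2 a)
      (I.1.orderIsoOfFin I.2 b)) = (diagonal d).submatrix Fin.revPerm id := by
    ext a b
    rw [of_apply, coe_orderIsoOfFin_apply, coe_orderIsoOfFin_apply,
      orderEmbOfFin_eq_rev_of_eq_image_rev (t := (complIdx n I).1)
        (compl_eq_image_rev_of_isRevFree I.2 hI) I.2,
      JMat_apply, submatrix_apply, Fin.revPerm_apply, id, diagonal_apply]
    simp only [Fin.rev_inj, EmbeddingLike.apply_eq_iff_eq]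
    by_cases h : a.rev = b <;> simp [h, d, e]
  have hprod : ∏ b, d b = (-1) ^ #{i ∈ I.1 | i.val < n} := by
    have hreindex : ∏ b, d b = ∏ i ∈ I.1, if i.val < n then -1 else 1 := by
      rw [← map_orderEmbOfFin_univ I.1 I.2, prod_map]; rfl
    rw [hreindex, prod_ite, prod_const, prod_const_one, mul_one]
  rw [wedgePow, hminor, det_permute, det_diagonal, hprod, Fin.sign_revPerm]
  push_cast; rfl

theorem qCoeff_compl_of_isRevFree {n : ℕ} {I : Idx n} (hI : IsRevFree I.1) :
    qCoeff n I (complIdx n I) = (-1) ^ #{i ∈ I.1 | n ≤ i.val} := by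
  have hcompl : (complIdx n I).1 = I.1.image Fin.rev := compl_eq_image_rev_of_isRevFree I.2 hI
  have hinv :
      #{p ∈ I.1 ×ˢ (complIdx n I).1 | p.2 < p.1} = #{p ∈ I.1 ×ˢ I.1 | p.2.rev < p.1} := by
    rw [hcompl]
    refine card_nbij' (fun p => (p.1, p.2.rev)) (fun p => (p.1, p.2.rev)) ?_ ?_ ?_ ?_ <;>
      intro p hp <;> simp_all [Fin.rev_eq_iff]
  have hdiag : #{i ∈ I.1 | i.rev < i} = #{i ∈ I.1 | n ≤ i.val} := by
    congr 1; refine filter_congr fun i _ => ?_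
    rw [Fin.lt_def, Fin.val_rev]; omega
  have hparity := card_filter_product_self_of_symmetric I.1 (fun i j => j.rev < i)
    fun _ _ => Fin.rev_lt_iff.1
  beta_reduce at hparity
  rw [qCoeff, if_pos (by exact rfl), hinv, hparity, hdiag,
    pow_add, pow_mul, neg_one_sq, one_pow, mul_one]

theorem qCoeff_mul_wedgePow_JMat_compl (n : ℕ) (I : Idx n) :
    qCoeff n I (complIdx n I) * wedgePow n (JMat n) (complIdx n I) I
      = if IsRevFree I.1 then (-1) ^ (n + n / 2) else 0 := by
  split_ifs with hI
  · have hsplit := card_filter_add_card_filter_not (s := I.1) fun i => i.val < n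
    simp only [not_lt, I.2] at hsplit
    rw [qCoeff_compl_of_isRevFree hI, wedgePow_JMat_compl_of_isRevFree hI, mul_left_comm,
      ← pow_add, add_comm, hsplit, pow_add, mul_comm]
  · rw [wedgePow_JMat_compl_of_not_isRevFree hI, mul_zero]

theorem complIdx_complIdx (n : ℕ) (I : Idx n) : complIdx n (complIdx n I) = I :=
  Subtype.ext (compl_compl _)

theorem Smat_apply (n : ℕ) (I K : Idx n) :
    Smat n I K = if K = complIdx n I then qCoeff n I K else 0 := by
  by_cases h : K = complIdx n I
  · subst h
    rw [Smat, if_pos (complIdx_complIdx n I).symm, complIdx_complIdx, if_pos rfl]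
  · rw [Smat, if_neg h, if_neg]
    rintro rfl
    exact h (complIdx_complIdx n K).symm

theorem trace_Amat (n : ℕ) :
    (Amat n).trace = ∑ I, qCoeff n I (complIdx n I) * wedgePow n (JMat n) (complIdx n I) I := by
  simp only [Matrix.trace, diag_apply, Amat, mul_apply, Smat_apply, ite_mul, zero_mul,
    sum_ite_eq', mem_univ, if_true]

theorem Amat_trace_general (n : ℕ) :
    (Amat n).trace = (-1 : ℂ) ^ (n + n / 2) * 2 ^ n ∧ (Amat n).trace ≠ 0 := by
  have htrace : (Amat n).trace = (-1 : ℂ) ^ (n + n / 2) * 2 ^ n := by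
    rw [trace_Amat, Fintype.sum_congr _ _ (qCoeff_mul_wedgePow_JMat_compl n), sum_ite,
      sum_const, sum_const_zero, add_zero, card_isRevFree, nsmul_eq_mul, Nat.cast_pow,
      Nat.cast_ofNat, mul_comm]
  exact ⟨htrace, htrace ▸ mul_ne_zero (pow_ne_zero _ (by norm_num)) (pow_ne_zero _ two_ne_zero)⟩

/-- The trace of the endomorphism `A = S ∘ ⋀ⁿ(J_{2n})` of `⋀ⁿ(ℂ^{2n})` equals
`(-1)^{n + ⌊n/2⌋} · 2ⁿ`; in particular `tr(A) ≠ 0`. -/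
theorem Amat_trace (n : ℕ) (hn : 1 ≤ n) :
    (Amat n).trace = (-1 : ℂ) ^ (n + n / 2) * 2 ^ n ∧ (Amat n).trace ≠ 0 :=
  Amat_trace_general n
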